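/- The spectral gap of the corner-flip dynamics on S^M_L(χ,ξ), the set of ±1-increment paths of length L from 0 to M constrained between two fixed paths χ ≤ ξ, is at least 1 - cos(π/L). -/

import Mathlib

open scoped Classical

/-- A `±1`-increment path of length `L` from `0` to `M` (extended by `M` beyond `L`). -/
def IsZPath (L : ℕ) (M : ℤ) (η : ℕ → ℤ) : Prop :=
  η 0 = 0 ∧ η L = M ∧
    (∀ x, x < L → (η (x + 1) - η x = 1 ∨ η (x + 1) - η x = -1)) ∧
    ∀ x, L < x → η x = M

/-- Corner-flip rates for the constrained dynamics: each transition modifies exactly one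
interior coordinate and occurs at rate `1/2` (a pair of paths in the constrained space
differing at exactly one interior coordinate is precisely a corner flip). -/
noncomputable def cfRate (L : ℕ) (η η' : ℕ → ℤ) : ℝ :=
  ∑ x ∈ Finset.Icc 1 (L - 1),
    if η' x ≠ η x ∧ ∀ y, y ≠ x → η' y = η y then (1 / 2 : ℝ) else 0


open RealInnerProductSpace


lemma spec_poincare {ι : Type*} [Fintype ι] (A : Matrix ι ι ℝ)
    (hA : A.IsHermitian) (δ : ℝ)
    (hconst : ∀ (g : ι → ℝ) (μ : ℝ), μ < δ → A.mulVec g = μ • g → ∀ i j, g i = g j)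
    (f : ι → ℝ) (hf : (∑ i, f i) = 0) :
    δ * ∑ i, (f i)^2 ≤ ∑ i, f i * (A.mulVec f) i := by
  classical
  have hT : (Matrix.toEuclideanLin A).IsSymmetric :=
    Matrix.isHermitian_iff_isSymmetric.mp hA
  set T := Matrix.toEuclideanLin A with hTdef
  have hrank : Module.finrank ℝ (EuclideanSpace ℝ ι)
      = Module.finrank ℝ (EuclideanSpace ℝ ι) := rfl
  set n := Module.finrank ℝ (EuclideanSpace ℝ ι) with hn
  set b := hT.eigenvectorBasis hrank with hb
  set μ := hT.eigenvalues hrank with hμ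
  set v : EuclideanSpace ℝ ι := (WithLp.equiv 2 (ι → ℝ)).symm f with hv
  have hvi : ∀ i, v i = f i := fun i => rfl
  have hTv : ∀ i, T v i = A.mulVec f i := fun i => rfl
  have h1 : ∑ i, f i * (A.mulVec f) i = ⟪v, T v⟫ := by
    rw [PiLp.inner_apply]
    simp [RCLike.inner_apply, hvi, hTv, mul_comm]
  have h2 : ∑ i, (f i)^2 = ⟪v, v⟫ := by
    rw [PiLp.inner_apply]
    simp [RCLike.inner_apply, hvi, pow_two]
  rw [h1, h2]
  -- expand in eigenbasis
  have hparse : ∀ w : EuclideanSpace ℝ ι, ⟪v, w⟫ = ∑ i, ⟪v, b i⟫ * ⟪b i, w⟫ :=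
    fun w => (b.sum_inner_mul_inner v w).symm
  have hTb : ∀ i, ⟪b i, T v⟫ = μ i * ⟪b i, v⟫ := by
    intro i
    rw [← hT (b i) v, hT.apply_eigenvectorBasis]
    rw [PiLp.inner_apply, PiLp.inner_apply, Finset.mul_sum]
    refine Finset.sum_congr rfl fun x _ => ?_
    simp [PiLp.smul_apply]
    ring
  have key : ∀ i : Fin n, δ * (⟪v, b i⟫ * ⟪b i, v⟫) ≤ μ i * (⟪v, b i⟫ * ⟪b i, v⟫) := by
    intro i
    rcases le_or_gt δ (μ i) with h | h
    · have : (0:ℝ) ≤ ⟪v, b i⟫ * ⟪b i, v⟫ := by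
        rw [real_inner_comm v (b i)]; exact mul_self_nonneg _
      nlinarith
    · -- eigenvector is constant, hence orthogonal to mean-zero v
      have heig : A.mulVec (b i) = μ i • (b i : ι → ℝ) := by
        funext j
        have h0 : T (b i) = μ i • b i := hT.apply_eigenvectorBasis hrank i
        have h1 : T (b i) j = (μ i • b i : EuclideanSpace ℝ ι) j := by rw [h0]
        have h2 : A.mulVec (b i) j = (μ i • b i : EuclideanSpace ℝ ι) j := h1
        simpa using h2
      have hconsti := hconst (b i) (μ i) h heig
      have : ⟪b i, v⟫ = 0 := by
        rw [PiLp.inner_apply]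
        rcases isEmpty_or_nonempty ι with hι | hι
        · simp
        · obtain ⟨j0⟩ := hι
          have : ∀ j, (b i : ι → ℝ) j = (b i) j0 := fun j => hconsti j j0
          calc ∑ j, ⟪(b i) j, v j⟫
              = ∑ j, (b i) j0 * f j := by
                refine Finset.sum_congr rfl fun j _ => by
                  simp [this j, hvi, RCLike.inner_apply', mul_comm]
            _ = (b i) j0 * ∑ j, f j := by rw [Finset.mul_sum]
            _ = 0 := by rw [hf]; ring
      simp [this]
  calc δ * ⟪v, v⟫ = ∑ i, δ * (⟪v, b i⟫ * ⟪b i, v⟫) := by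
        rw [hparse v, Finset.mul_sum]
    _ ≤ ∑ i, μ i * (⟪v, b i⟫ * ⟪b i, v⟫) := Finset.sum_le_sum fun i _ => key i
    _ = ⟪v, T v⟫ := by
        rw [hparse (T v)]
        refine Finset.sum_congr rfl fun i _ => by rw [hTb i]; ring


def wgInS (L : ℕ) (M : ℤ) (χ ξ : ℕ → ℤ) (η : ℕ → ℤ) : Prop :=
  IsZPath L M η ∧ (∀ x, χ x ≤ η x) ∧ ∀ x, η x ≤ ξ x

noncomputable def wgFlip (η : ℕ → ℤ) (x : ℕ) : ℕ → ℤ :=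
  Function.update η x (η (x-1) + η (x+1) - η x)

section Basic
variable {L : ℕ} {M : ℤ} {χ ξ : ℕ → ℤ} {η η' ζ τ : ℕ → ℤ} {x y : ℕ}

lemma wgFlip_ne (h : y ≠ x) : wgFlip η x y = η y := Function.update_of_ne h _ _

lemma wgFlip_self : wgFlip η x x = η (x-1) + η (x+1) - η x := Function.update_self _ _ _

lemma icc_facts (hx : x ∈ Finset.Icc 1 (L-1)) :
    1 ≤ x ∧ x < L ∧ x - 1 + 1 = x ∧ x - 1 < L ∧ 2 ≤ L := by
  simp only [Finset.mem_Icc] at hx; omega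

lemma wgFlip_flip (hx1 : 1 ≤ x) : wgFlip (wgFlip η x) x = η := by
  funext y
  by_cases h : y = x
  · subst h
    rw [wgFlip_self, wgFlip_ne (by omega), wgFlip_ne (by omega), wgFlip_self]
    ring
  · rw [wgFlip_ne h, wgFlip_ne h]

lemma wgFlip_eq_self_iff : wgFlip η x = η ↔ η (x-1) + η (x+1) - η x = η x := by
  constructor
  · intro h
    have := congrFun h x
    rwa [wgFlip_self] at this
  · intro h
    funext y
    by_cases hy : y = x
    · subst hy; rw [wgFlip_self, h]
    · rw [wgFlip_ne hy]

lemma wgFlip_path (hη : IsZPath L M η) (hx : x ∈ Finset.Icc 1 (L-1)) :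
    IsZPath L M (wgFlip η x) := by
  obtain ⟨hx1, hxL, hxm, hxm2, hL2⟩ := icc_facts hx
  obtain ⟨h0, hLM, hstep, hbig⟩ := hη
  refine ⟨?_, ?_, ?_, ?_⟩
  · rw [wgFlip_ne (by omega)]; exact h0
  · rw [wgFlip_ne (by omega)]; exact hLM
  · intro z hz
    rcases eq_or_ne z x with hzx | hzx
    · rw [hzx, wgFlip_ne (by omega), wgFlip_self]
      have := hstep (x-1) (by omega)
      rw [hxm] at this
      omega
    · rcases eq_or_ne z (x-1) with hzx1 | hzx1
      · rw [hzx1, hxm, wgFlip_self, wgFlip_ne (by omega)]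
        have := hstep x hxL
        omega
      · rw [wgFlip_ne (by omega), wgFlip_ne hzx]
        exact hstep z hz
  · intro z hz
    rw [wgFlip_ne (by omega)]
    exact hbig z hz

lemma wgFlip_inS_iff (hη : wgInS L M χ ξ η) (hx : x ∈ Finset.Icc 1 (L-1)) :
    wgInS L M χ ξ (wgFlip η x) ↔
      (χ x ≤ η (x-1) + η (x+1) - η x ∧ η (x-1) + η (x+1) - η x ≤ ξ x) := by
  constructor
  · intro h
    have h1 := h.2.1 x
    have h2 := h.2.2 x
    rw [wgFlip_self] at h1 h2
    exact ⟨h1, h2⟩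
  · intro ⟨h1, h2⟩
    refine ⟨wgFlip_path hη.1 hx, fun z => ?_, fun z => ?_⟩
    · rcases eq_or_ne z x with rfl | hzx
      · rw [wgFlip_self]; exact h1
      · rw [wgFlip_ne hzx]; exact hη.2.1 z
    · rcases eq_or_ne z x with rfl | hzx
      · rw [wgFlip_self]; exact h2
      · rw [wgFlip_ne hzx]; exact hη.2.2 z

lemma wgMix (hx : x ∈ Finset.Icc 1 (L-1)) (hζ : wgInS L M χ ξ ζ) (hτ : wgInS L M χ ξ τ)
    (h1 : ζ (x-1) = τ (x-1)) (h2 : ζ (x+1) = τ (x+1)) :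
    wgInS L M χ ξ (Function.update ζ x (τ x)) := by
  obtain ⟨hx1, hxL, hxm, hxm2, hL2⟩ := icc_facts hx
  have hupne : ∀ z, z ≠ x → Function.update ζ x (τ x) z = ζ z :=
    fun z hz => Function.update_of_ne hz _ _
  have hups : Function.update ζ x (τ x) x = τ x := Function.update_self _ _ _
  refine ⟨⟨?_, ?_, ?_, ?_⟩, fun z => ?_, fun z => ?_⟩
  · rw [hupne 0 (by omega)]; exact hζ.1.1
  · rw [hupne L (by omega)]; exact hζ.1.2.1
  · intro z hz
    rcases eq_or_ne z x with hzx | hzx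
    · rw [hzx, hupne (x+1) (by omega), hups, h2]
      have := hτ.1.2.2.1 x (by omega)
      omega
    · rcases eq_or_ne z (x-1) with hzx1 | hzx1
      · rw [hzx1, hxm, hups, hupne (x-1) (by omega), h1]
        have := hτ.1.2.2.1 (x-1) (by omega)
        rw [hxm] at this
        omega
      · rw [hupne (z+1) (by omega), hupne z hzx]
        exact hζ.1.2.2.1 z hz
  · intro z hz
    rw [hupne z (by omega)]
    exact hζ.1.2.2.2 z hz
  · rcases eq_or_ne z x with rfl | hzx
    · rw [hups]; exact hτ.2.1 z
    · rw [hupne z hzx]; exact hζ.2.1 z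
  · rcases eq_or_ne z x with rfl | hzx
    · rw [hups]; exact hτ.2.2 z
    · rw [hupne z hzx]; exact hζ.2.2 z

lemma wgUnique (hη : IsZPath L M η) (hη' : IsZPath L M η') (hx : x ∈ Finset.Icc 1 (L-1))
    (hne : η' x ≠ η x) (heq : ∀ y, y ≠ x → η' y = η y) : η' = wgFlip η x := by
  obtain ⟨hx1, hxL, hxm, hxm2, hL2⟩ := icc_facts hx
  have e1 := hη.2.2.1 (x-1) (by omega)
  have e2 := hη.2.2.1 x hxL
  have e1' := hη'.2.2.1 (x-1) (by omega)
  have e2' := hη'.2.2.1 x hxL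
  rw [hxm] at e1 e1'
  have q1 : η' (x-1) = η (x-1) := heq _ (by omega)
  have q2 : η' (x+1) = η (x+1) := heq _ (by omega)
  rw [q1] at e1'
  rw [q2] at e2'
  funext y
  by_cases hy : y = x
  · subst hy; rw [wgFlip_self]; omega
  · rw [wgFlip_ne hy]; exact heq y hy

end Basic

section Conn
variable {L : ℕ} {M : ℤ} {χ ξ : ℕ → ℤ} {η ζ : ℕ → ℤ} {x : ℕ}

lemma wgEven (hη : IsZPath L M η) (hζ : IsZPath L M ζ) (x : ℕ) : Even (η x - ζ x) := by
  have key : ∀ y, y ≤ L → Even (η y - ζ y) := by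
    intro y
    induction y with
    | zero => intro _; rw [hη.1, hζ.1]; exact ⟨0, by ring⟩
    | succ n ih =>
      intro h
      have he := hη.2.2.1 n (by omega)
      have hz := hζ.2.2.1 n (by omega)
      obtain ⟨r, hr⟩ := ih (by omega)
      rcases he with he | he <;> rcases hz with hz | hz
      · exact ⟨r, by omega⟩
      · exact ⟨r + 1, by omega⟩
      · exact ⟨r - 1, by omega⟩
      · exact ⟨r, by omega⟩
  rcases le_or_gt x L with h | h
  · exact key x h
  · rw [hη.2.2.2 x h, hζ.2.2.2 x h]; exact ⟨0, by ring⟩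

lemma wgDown (hχ : IsZPath L M χ) (hη : wgInS L M χ ξ η) (hne : η ≠ χ) :
    ∃ x ∈ Finset.Icc 1 (L-1), wgInS L M χ ξ (wgFlip η x) ∧ wgFlip η x x = η x - 2 := by
  have hg0 : ∀ y, 0 ≤ η y - χ y := fun y => by have := hη.2.1 y; omega
  have hex : ∃ y0, y0 ≤ L ∧ 0 < η y0 - χ y0 := by
    by_contra h
    push_neg at h
    apply hne
    funext y
    rcases le_or_gt y L with hy | hy
    · have := h y hy; have := hg0 y; omega
    · rw [hη.1.2.2.2 y hy, hχ.2.2.2 y hy]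
  obtain ⟨y0, hy0L, hy0⟩ := hex
  obtain ⟨x1, hx1mem, hx1max⟩ := Finset.exists_max_image (Finset.Icc 0 L)
    (fun y => η y - χ y) ⟨y0, Finset.mem_Icc.mpr ⟨Nat.zero_le _, hy0L⟩⟩
  obtain ⟨x, hxmem, hxmax⟩ := Finset.exists_max_image
    ((Finset.Icc 0 L).filter (fun y => η x1 - χ x1 ≤ η y - χ y)) η
    ⟨x1, by simp only [Finset.mem_filter]; exact ⟨hx1mem, le_refl _⟩⟩
  simp only [Finset.mem_filter] at hxmem
  obtain ⟨hxIcc, hxge⟩ := hxmem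
  have hgmax : ∀ y, y ≤ L → η y - χ y ≤ η x - χ x :=
    fun y hy => le_trans (hx1max y (Finset.mem_Icc.mpr ⟨Nat.zero_le _, hy⟩)) hxge
  have hsecond : ∀ y, y ≤ L → η x - χ x ≤ η y - χ y → η y ≤ η x := by
    intro y hy hgy
    exact hxmax y (Finset.mem_filter.mpr
      ⟨Finset.mem_Icc.mpr ⟨Nat.zero_le _, hy⟩, le_trans hxge hgy⟩)
  have hgpos : 0 < η x - χ x := lt_of_lt_of_le hy0 (hgmax y0 hy0L)
  simp only [Finset.mem_Icc] at hxIcc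
  have hx0 : x ≠ 0 := by
    intro h; rw [h] at hgpos; rw [hη.1.1, hχ.1] at hgpos; omega
  have hxL : x ≠ L := by
    intro h; rw [h] at hgpos; rw [hη.1.2.1, hχ.2.1] at hgpos; omega
  have hxI : x ∈ Finset.Icc 1 (L-1) := by simp only [Finset.mem_Icc]; omega
  have s1 := hη.1.2.2.1 x (by omega)
  have s2 := hη.1.2.2.1 (x-1) (by omega)
  have c1 := hχ.2.2.1 x (by omega)
  have c2 := hχ.2.2.1 (x-1) (by omega)
  rw [show x - 1 + 1 = x by omega] at s2 c2
  have hup : η (x+1) = η x - 1 := by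
    by_contra h
    have h' : η (x+1) = η x + 1 := by omega
    have hle := hgmax (x+1) (by omega)
    have := hsecond (x+1) (by omega) (by omega)
    omega
  have hdn : η (x-1) = η x - 1 := by
    by_contra h
    have h' : η (x-1) = η x + 1 := by omega
    have hle := hgmax (x-1) (by omega)
    have := hsecond (x-1) (by omega) (by omega)
    omega
  obtain ⟨r, hr⟩ := wgEven hη.1 hχ x
  have hg2 : 2 ≤ η x - χ x := by omega
  have hv : η (x-1) + η (x+1) - η x = η x - 2 := by omega
  refine ⟨x, hxI, ?_, ?_⟩
  · rw [wgFlip_inS_iff hη hxI, hv]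
    have := hη.2.2 x
    constructor <;> omega
  · rw [wgFlip_self, hv]

lemma wgReach (hχ : IsZPath L M χ) (hχξ : ∀ x, χ x ≤ ξ x) (F : (ℕ → ℤ) → ℝ)
    (HE : ∀ ζ, wgInS L M χ ξ ζ → ∀ x ∈ Finset.Icc 1 (L-1),
      wgInS L M χ ξ (wgFlip ζ x) → F (wgFlip ζ x) = F ζ) :
    ∀ η, wgInS L M χ ξ η → F η = F χ := by
  set meas : (ℕ → ℤ) → ℕ := fun η => ∑ y ∈ Finset.Icc 1 (L-1), (η y - χ y).toNat with hmeas
  suffices h : ∀ n η, wgInS L M χ ξ η → meas η = n → F η = F χ by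
    intro η hη; exact h (meas η) η hη rfl
  intro n
  induction n using Nat.strong_induction_on with
  | _ n ih =>
    intro η hη hm
    by_cases hne : η = χ
    · rw [hne]
    · obtain ⟨x, hxI, hflipS, hflipval⟩ := wgDown hχ hη hne
      have hstep := HE η hη x hxI hflipS
      have hχx := hflipS.2.1 x
      rw [hflipval] at hχx
      have hlt : meas (wgFlip η x) < n := by
        rw [← hm]
        refine Finset.sum_lt_sum (fun y hy => ?_) ⟨x, hxI, ?_⟩
        · rcases eq_or_ne y x with rfl | h
          · rw [hflipval]; omega
          · rw [wgFlip_ne h]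
        · rw [hflipval]; omega
      rw [← hstep]
      exact ih _ hlt _ hflipS rfl

end Conn

section Trig
open Real
variable {L x : ℕ}

lemma wgSin_nonneg (hx : x ≤ L) : 0 ≤ Real.sin (π * x / L) := by
  rcases Nat.eq_zero_or_pos L with rfl | hL
  · interval_cases x; simp
  apply Real.sin_nonneg_of_nonneg_of_le_pi
  · positivity
  · rw [div_le_iff₀ (by positivity)]
    have hπ := Real.pi_pos
    have : (x:ℝ) ≤ (L:ℝ) := by exact_mod_cast hx
    nlinarith

lemma wgSin_pos (hx1 : 1 ≤ x) (hxL : x ≤ L - 1) : 0 < Real.sin (π * x / L) := by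
  have hL : 2 ≤ L := by omega
  have hLR : (1:ℝ) ≤ (x:ℝ) := by exact_mod_cast hx1
  have hxR : (x:ℝ) < (L:ℝ) := by exact_mod_cast (by omega : x < L)
  have hπ := Real.pi_pos
  apply Real.sin_pos_of_pos_of_lt_pi
  · positivity
  · rw [div_lt_iff₀ (by positivity)]
    nlinarith

lemma wgSin_rec (hx1 : 1 ≤ x) :
    Real.sin (π * (↑(x-1)) / L) + Real.sin (π * (↑(x+1)) / L)
      = 2 * Real.cos (π / L) * Real.sin (π * x / L) := by
  rcases Nat.eq_zero_or_pos L with rfl | hL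
  · norm_num
  have h1 : ((x-1 : ℕ):ℝ) = (x:ℝ) - 1 := by
    have : (1:ℝ) ≤ (x:ℝ) := by exact_mod_cast hx1
    push_cast [Nat.cast_sub hx1]; ring
  have hLne : (L:ℝ) ≠ 0 := by positivity
  rw [h1]
  push_cast
  have e1 : π * ((x:ℝ) - 1) / L = π * x / L - π / L := by field_simp
  have e2 : π * ((x:ℝ) + 1) / L = π * x / L + π / L := by field_simp
  rw [e1, e2, Real.sin_sub, Real.sin_add]
  ring

end Trig

section Gen
open Real
variable {L : ℕ} {M : ℤ} {χ ξ : ℕ → ℤ}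

noncomputable def wgGen (L : ℕ) (M : ℤ) (χ ξ : ℕ → ℤ) (F : (ℕ → ℤ) → ℝ) (η : ℕ → ℤ) : ℝ :=
  ∑ x ∈ Finset.Icc 1 (L-1),
    (1/2 : ℝ) * (if wgInS L M χ ξ (wgFlip η x) then F (wgFlip η x) - F η else 0)

lemma wgFlip_comm {η : ℕ → ℤ} {x y : ℕ} (hx1 : 1 ≤ x) (hy1 : 1 ≤ y)
    (h : x ≠ y) (h1 : x ≠ y + 1) (h2 : y ≠ x + 1) :
    wgFlip (wgFlip η x) y = wgFlip (wgFlip η y) x := by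
  funext z
  by_cases hzx : z = x
  · have a1 : wgFlip (wgFlip η x) y x = η (x-1) + η (x+1) - η x := by
      rw [wgFlip_ne (show x ≠ y from h), wgFlip_self]
    have a2 : wgFlip (wgFlip η y) x x = η (x-1) + η (x+1) - η x := by
      rw [wgFlip_self, wgFlip_ne (show x-1 ≠ y by omega),
        wgFlip_ne (show x+1 ≠ y by omega), wgFlip_ne (show x ≠ y from h)]
    rw [hzx, a1, a2]
  · by_cases hzy : z = y
    · have b1 : wgFlip (wgFlip η x) y y = η (y-1) + η (y+1) - η y := by
        rw [wgFlip_self, wgFlip_ne (show y-1 ≠ x by omega),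
          wgFlip_ne (show y+1 ≠ x by omega), wgFlip_ne (Ne.symm h)]
      have b2 : wgFlip (wgFlip η y) x y = η (y-1) + η (y+1) - η y := by
        rw [wgFlip_ne (Ne.symm h), wgFlip_self]
      rw [hzy, b1, b2]
    · have c1 : wgFlip (wgFlip η x) y z = η z := by rw [wgFlip_ne hzy, wgFlip_ne hzx]
      have c2 : wgFlip (wgFlip η y) x z = η z := by rw [wgFlip_ne hzx, wgFlip_ne hzy]
      rw [c1, c2]

lemma wgFlip_far_eq {η : ℕ → ℤ} {x y : ℕ} (hx1 : 1 ≤ x) (hy1 : 1 ≤ y)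
    (h : x ≠ y) (h1 : x ≠ y + 1) (h2 : y ≠ x + 1) :
    wgFlip (wgFlip η x) y = Function.update (wgFlip η y) x (wgFlip η x x) := by
  rw [wgFlip_comm hx1 hy1 h h1 h2]
  funext z
  by_cases hzx : z = x
  · have a1 : wgFlip (wgFlip η y) x x = η (x-1) + η (x+1) - η x := by
      rw [wgFlip_self, wgFlip_ne (show x-1 ≠ y by omega),
        wgFlip_ne (show x+1 ≠ y by omega), wgFlip_ne (show x ≠ y from h)]
    have a2 : Function.update (wgFlip η y) x (wgFlip η x x) x = η (x-1) + η (x+1) - η x := by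
      rw [Function.update_self, wgFlip_self]
    rw [hzx, a1, a2]
  · rw [wgFlip_ne hzx, Function.update_of_ne hzx]

lemma wgFlip_far_mem {η : ℕ → ℤ} {x y : ℕ} (hx : x ∈ Finset.Icc 1 (L-1))
    (hy : y ∈ Finset.Icc 1 (L-1)) (h : x ≠ y) (h1 : x ≠ y + 1) (h2 : y ≠ x + 1)
    (hη : wgInS L M χ ξ η) (hηx : wgInS L M χ ξ (wgFlip η x))
    (hm : wgInS L M χ ξ (wgFlip η y)) : wgInS L M χ ξ (wgFlip (wgFlip η x) y) := by
  obtain ⟨hx1, hxL, hxm, hxm2, hL2⟩ := icc_facts hx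
  obtain ⟨hy1, hyL, hym, hym2, _⟩ := icc_facts hy
  rw [wgFlip_far_eq hx1 hy1 h h1 h2]
  have e1 : wgFlip η y (x-1) = η (x-1) := wgFlip_ne (by omega)
  have e2 : wgFlip η y (x+1) = η (x+1) := wgFlip_ne (by omega)
  exact wgMix hx hm hηx (by rw [e1, wgFlip_ne (by omega : x-1 ≠ x)])
    (by rw [e2, wgFlip_ne (by omega : x+1 ≠ x)])

end Gen

section Contract
open Real
variable {L : ℕ} {M : ℤ} {χ ξ : ℕ → ℤ}

lemma wgContract (F : (ℕ → ℤ) → ℝ) (K : ℝ) (hK : 0 ≤ K)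
    (H : ∀ ζ, wgInS L M χ ξ ζ → ∀ x ∈ Finset.Icc 1 (L-1), wgInS L M χ ξ (wgFlip ζ x) →
      |F (wgFlip ζ x) - F ζ| ≤ K * (2 * Real.sin (π * x / L)))
    {η : ℕ → ℤ} (hη : wgInS L M χ ξ η) {xh : ℕ} (hx : xh ∈ Finset.Icc 1 (L-1))
    (hη' : wgInS L M χ ξ (wgFlip η xh)) :
    |(L:ℝ) * (F (wgFlip η xh) - F η) + (wgGen L M χ ξ F (wgFlip η xh) - wgGen L M χ ξ F η)|
      ≤ ((L:ℝ) - (1 - Real.cos (π / L))) * (K * (2 * Real.sin (π * xh / L))) := by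
  obtain ⟨hx1, hxL, hxm, hxm2, hL2⟩ := icc_facts hx
  set I := Finset.Icc 1 (L-1) with hI
  set ψ : ℕ → ℝ := fun y => Real.sin (π * y / L) with hψ
  set η' := wgFlip η xh with hη'def
  set D := F η' - F η with hD
  have hLR : (2:ℝ) ≤ (L:ℝ) := by exact_mod_cast hL2
  have hψnn : ∀ y, y ≤ L → 0 ≤ ψ y := fun y hy => wgSin_nonneg hy
  have hψx : 0 ≤ ψ xh := hψnn xh (by omega)
  have hδL : (1 : ℝ) - Real.cos (π/L) ≤ (L:ℝ) := by
    have := Real.neg_one_le_cos (π/L); linarith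
  have hRHSnn : 0 ≤ ((L:ℝ) - (1 - Real.cos (π / L))) * (K * (2 * ψ xh)) := by
    apply mul_nonneg (by linarith) (by positivity)
  by_cases hne : η' = η
  · rw [hη'def] at hne
    rw [show wgGen L M χ ξ F η' - wgGen L M χ ξ F η = 0 by rw [hη'def, hne]; ring,
      show D = 0 by rw [hD, hη'def, hne]; ring]
    simpa using hRHSnn
  have hnex : η' xh ≠ η xh := by
    intro hsame
    apply hne
    rw [hη'def] at hsame ⊢
    rw [wgFlip_self] at hsame
    exact wgFlip_eq_self_iff.mpr hsame
  have hDb : |D| ≤ K * (2 * ψ xh) := H η hη xh hx hη'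
  set Fo : (ℕ → ℤ) → ℕ → ℝ :=
    fun ζ y => if wgInS L M χ ξ (wgFlip ζ y) then F (wgFlip ζ y) - F ζ else 0 with hFo
  have hGen : ∀ ζ, wgGen L M χ ξ F ζ = ∑ y ∈ I, (1/2:ℝ) * Fo ζ y := fun ζ => rfl
  set c : ℕ → ℝ := fun y => if y = xh then 2 else if y = xh+1 ∨ y = xh-1 then 0
    else if wgInS L M χ ξ (wgFlip η y) then 1 else 0 with hc
  set w : ℕ → ℝ := fun y => if y = xh then 0 else if y = xh+1 ∨ y = xh-1 then ψ y
    else c y * ψ xh with hw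
  -- per-site bound
  have hkey : ∀ y ∈ I, |Fo η' y - Fo η y + c y * D| ≤ 2 * K * w y := by
    intro y hy
    have hyI := hy
    rw [hI, Finset.mem_Icc] at hyI
    obtain ⟨hy1, hyL⟩ := hyI
    by_cases h1 : y = xh
    · have fo1 : Fo η y = D := by
        simp only [hFo]
        rw [h1, ← hη'def, if_pos hη', ← hD]
      have fo2 : Fo η' y = -D := by
        simp only [hFo]
        rw [h1, show wgFlip η' xh = η from by rw [hη'def]; exact wgFlip_flip hx1,
          if_pos hη, hD]
        ring
      have hcy : c y = 2 := by rw [hc]; simp only [if_pos h1]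
      have hwy : w y = 0 := by rw [hw]; simp only [if_pos h1]
      rw [fo1, fo2, hcy, hwy]
      have : -D - D + 2 * D = 0 := by ring
      rw [this]
      simp
    · by_cases h2 : y = xh + 1 ∨ y = xh - 1
      · -- near site
        have hcy : c y = 0 := by rw [hc]; simp only [if_neg h1, if_pos h2]
        have hwy : w y = ψ y := by rw [hw]; simp only [if_neg h1, if_pos h2]
        have hcorn : wgFlip η y = η ∨ wgFlip η' y = η' := by
          by_contra hcon
          push_neg at hcon
          obtain ⟨hc1, hc2⟩ := hcon
          rw [Ne, wgFlip_eq_self_iff] at hc1 hc2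
          rcases h2 with h2 | h2
          · have v1 : y - 1 = xh := by omega
            have v2 : η' (y+1) = η (y+1) := by rw [hη'def]; exact wgFlip_ne (by omega)
            have v3 : η' y = η y := by rw [hη'def]; exact wgFlip_ne h1
            rw [v1, v2, v3] at hc2
            rw [v1] at hc1
            have e1 := hη.1.2.2.1 xh (by omega)
            have e1' := hη'.1.2.2.1 xh (by omega)
            have e2 := hη.1.2.2.1 y (by omega)
            rw [show xh + 1 = y by omega] at e1 e1'
            rw [hη'def] at e1'
            rw [show wgFlip η xh y = η y from wgFlip_ne h1] at e1'
            rw [← hη'def] at e1'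
            omega
          · have v1 : y + 1 = xh := by omega
            have v2 : η' (y-1) = η (y-1) := by rw [hη'def]; exact wgFlip_ne (by omega)
            have v3 : η' y = η y := by rw [hη'def]; exact wgFlip_ne h1
            rw [v1, v2, v3] at hc2
            rw [v1] at hc1
            have e1 := hη.1.2.2.1 y (by omega)
            have e1' := hη'.1.2.2.1 y (by omega)
            rw [v1] at e1 e1'
            rw [v3] at e1'
            have e0 := hη.1.2.2.1 (y-1) (by omega)
            rw [show y - 1 + 1 = y by omega] at e0
            omega
        rcases hcorn with hco | hco
        · have fz : Fo η y = 0 := by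
            simp only [hFo]; rw [hco, if_pos hη]; ring
          have hb : |Fo η' y| ≤ K * (2 * ψ y) := by
            simp only [hFo]
            split_ifs with hmem
            · exact H η' hη' y hy hmem
            · rw [abs_zero]
              exact mul_nonneg hK (mul_nonneg (by norm_num) (hψnn y (by omega)))
          have : Fo η' y - Fo η y + c y * D = Fo η' y := by rw [fz, hcy]; ring
          rw [this, hwy]
          linarith
        · have fz : Fo η' y = 0 := by
            simp only [hFo]; rw [hco, if_pos hη']; ring
          have hb : |Fo η y| ≤ K * (2 * ψ y) := by
            simp only [hFo]
            split_ifs with hmem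
            · exact H η hη y hy hmem
            · rw [abs_zero]
              exact mul_nonneg hK (mul_nonneg (by norm_num) (hψnn y (by omega)))
          have : Fo η' y - Fo η y + c y * D = -(Fo η y) := by rw [fz, hcy]; ring
          rw [this, hwy, abs_neg]
          linarith
      · -- far site
        push_neg at h2
        obtain ⟨h2a, h2b⟩ := h2
        have hy1' : 1 ≤ y := hy1
        have hxy : xh ≠ y := Ne.symm h1
        have hxy1 : xh ≠ y + 1 := by omega
        have hyx1 : y ≠ xh + 1 := h2a
        have hcomm : wgFlip η' y = wgFlip (wgFlip η y) xh := by
          rw [hη'def]; exact wgFlip_comm hx1 hy1 hxy hxy1 hyx1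
        have hmemiff : wgInS L M χ ξ (wgFlip η y) ↔ wgInS L M χ ξ (wgFlip η' y) := by
          constructor
          · intro hm
            rw [hcomm]
            exact wgFlip_far_mem hy hx (Ne.symm hxy) (by omega) (by omega) hη hm
              (by rw [← hη'def]; exact hη')
          · intro hm
            have hff : wgFlip η' xh = η := by rw [hη'def]; exact wgFlip_flip hx1
            have hcomm' : wgFlip (wgFlip η' y) xh = wgFlip η y := by
              rw [← wgFlip_comm hx1 hy1 hxy hxy1 hyx1, hff]
            rw [← hcomm']
            exact wgFlip_far_mem hy hx (Ne.symm hxy) (by omega) (by omega) hη' hm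
              (by rw [hff]; exact hη)
        by_cases hm : wgInS L M χ ξ (wgFlip η y)
        · have hm' : wgInS L M χ ξ (wgFlip η' y) := hmemiff.mp hm
          have hΔ : |F (wgFlip η' y) - F (wgFlip η y)| ≤ K * (2 * ψ xh) := by
            have := H (wgFlip η y) hm xh hx (by rw [← hcomm]; exact hm')
            rwa [← hcomm] at this
          have hcy : c y = 1 := by
            rw [hc]
            simp only [if_neg h1, if_neg (show ¬(y = xh+1 ∨ y = xh-1) by tauto), if_pos hm]
          have hwy : w y = c y * ψ xh := by
            rw [hw]
            simp only [if_neg h1, if_neg (show ¬(y = xh+1 ∨ y = xh-1) by tauto)]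
          have : Fo η' y - Fo η y + c y * D = F (wgFlip η' y) - F (wgFlip η y) := by
            simp only [hFo]
            rw [if_pos hm, if_pos hm', hcy, hD]
            ring
          rw [this, hwy, hcy]
          calc |F (wgFlip η' y) - F (wgFlip η y)| ≤ K * (2 * ψ xh) := hΔ
            _ = 2 * K * (1 * ψ xh) := by ring
        · have hm' : ¬ wgInS L M χ ξ (wgFlip η' y) := fun h => hm (hmemiff.mpr h)
          have hcy : c y = 0 := by
            rw [hc]
            simp only [if_neg h1, if_neg (show ¬(y = xh+1 ∨ y = xh-1) by tauto), if_neg hm]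
          have hwy : w y = c y * ψ xh := by
            rw [hw]
            simp only [if_neg h1, if_neg (show ¬(y = xh+1 ∨ y = xh-1) by tauto)]
          have : Fo η' y - Fo η y + c y * D = 0 := by
            simp only [hFo]
            rw [if_neg hm, if_neg hm', hcy]
            ring
          rw [this, hwy, hcy]
          simp
  -- bounds on c
  have hcnn : ∀ y ∈ I, (0:ℝ) ≤ c y := by
    intro y _
    rw [hc]; dsimp only; split_ifs <;> norm_num
  have hcub : ∀ y ∈ I, c y ≤ (if y = xh then (2:ℝ) else 1) := by
    intro y _
    rw [hc]; dsimp only; split_ifs <;> norm_num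
  have hcard : (I.card : ℝ) = (L:ℝ) - 1 := by
    have h' : I.card = L - 1 := by rw [hI, Nat.card_Icc]; omega
    rw [h', Nat.cast_sub (by omega)]; norm_num
  have hsumc_le : ∑ y ∈ I, c y ≤ (L:ℝ) := by
    calc ∑ y ∈ I, c y ≤ ∑ y ∈ I, (if y = xh then (2:ℝ) else 1) := Finset.sum_le_sum hcub
      _ = ∑ y ∈ I, ((1:ℝ) + if y = xh then 1 else 0) := by
          refine Finset.sum_congr rfl fun y _ => ?_
          split_ifs <;> norm_num
      _ = (I.card : ℝ) * 1 + ∑ y ∈ I, (if y = xh then (1:ℝ) else 0) := by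
          rw [Finset.sum_add_distrib, Finset.sum_const, nsmul_eq_mul]
      _ = ((L:ℝ) - 1) + 1 := by
          rw [Finset.sum_ite_eq' I xh (fun _ => (1:ℝ)), if_pos hx, hcard]; ring
      _ = (L:ℝ) := by ring
  have hsumc_nn : (0:ℝ) ≤ ∑ y ∈ I, c y := Finset.sum_nonneg hcnn
  have hrec : ψ (xh-1) + ψ (xh+1) = 2 * Real.cos (π/L) * ψ xh := wgSin_rec hx1
  -- the weight inequality
  have hUW : 2 * (1 - Real.cos (π / L)) * ψ xh
      ≤ (∑ y ∈ I, c y) * ψ xh - ∑ y ∈ I, w y := by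
    have hpw : ∀ y ∈ I, (if y = xh then 2*ψ xh else 0) - (if y = xh+1 then ψ y else 0)
        - (if y = xh-1 then ψ y else 0) ≤ c y * ψ xh - w y := by
      intro y hy
      have hyI := hy
      rw [hI, Finset.mem_Icc] at hyI
      by_cases h1 : y = xh
      · have n1 : ¬ (y = xh + 1) := by omega
        have n2 : ¬ (y = xh - 1) := by omega
        have hcy : c y = 2 := by rw [hc]; simp only [if_pos h1]
        have hwy : w y = 0 := by rw [hw]; simp only [if_pos h1]
        rw [if_pos h1, if_neg n1, if_neg n2, hcy, hwy]
        linarith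
      · by_cases h2 : y = xh + 1 ∨ y = xh - 1
        · have hcy : c y = 0 := by rw [hc]; simp only [if_neg h1, if_pos h2]
          have hwy : w y = ψ y := by rw [hw]; simp only [if_neg h1, if_pos h2]
          have hψy : 0 ≤ ψ y := hψnn y (by omega)
          rw [if_neg h1, hcy, hwy]
          rcases h2 with h2 | h2
          · have n2 : ¬ (y = xh - 1) := by omega
            rw [if_pos h2, if_neg n2]; linarith
          · have n1 : ¬ (y = xh + 1) := by omega
            rw [if_neg n1, if_pos h2]; linarith
        · push_neg at h2
          have hwy : w y = c y * ψ xh := by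
            rw [hw]
            simp only [if_neg h1, if_neg (show ¬(y = xh+1 ∨ y = xh-1) by tauto)]
          rw [if_neg h1, if_neg h2.1, if_neg h2.2, hwy]
          linarith
    have hsplit := Finset.sum_le_sum hpw
    rw [Finset.sum_sub_distrib, Finset.sum_sub_distrib, Finset.sum_sub_distrib,
      ← Finset.sum_mul] at hsplit
    rw [Finset.sum_ite_eq' I xh (fun _ => 2*ψ xh), if_pos hx] at hsplit
    rw [Finset.sum_ite_eq' I (xh+1) (fun y => ψ y)] at hsplit
    rw [Finset.sum_ite_eq' I (xh-1) (fun y => ψ y)] at hsplit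
    have b1 : (if xh+1 ∈ I then ψ (xh+1) else 0) ≤ ψ (xh+1) := by
      split_ifs
      · exact le_refl _
      · exact hψnn _ (by omega)
    have b2 : (if xh-1 ∈ I then ψ (xh-1) else 0) ≤ ψ (xh-1) := by
      split_ifs
      · exact le_refl _
      · exact hψnn _ (by omega)
    linarith
  -- expansion of the generator difference
  have e1 : wgGen L M χ ξ F η' - wgGen L M χ ξ F η
      = (1/2) * ∑ y ∈ I, (Fo η' y - Fo η y) := by
    rw [hGen, hGen, Finset.mul_sum, ← Finset.sum_sub_distrib]
    exact Finset.sum_congr rfl fun y _ => by ring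
  have e2 : ∑ y ∈ I, (Fo η' y - Fo η y + c y * D)
      = (∑ y ∈ I, (Fo η' y - Fo η y)) + (∑ y ∈ I, c y) * D := by
    rw [Finset.sum_add_distrib, Finset.sum_mul]
  have hexpand : (L:ℝ) * D + (wgGen L M χ ξ F η' - wgGen L M χ ξ F η)
      = ((L:ℝ) - (1/2) * ∑ y ∈ I, c y) * D
        + (1/2) * ∑ y ∈ I, (Fo η' y - Fo η y + c y * D) := by
    rw [e1, e2]; ring
  have hcoef : (0:ℝ) ≤ (L:ℝ) - (1/2) * ∑ y ∈ I, c y := by linarith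
  have s1 : |((L:ℝ) - (1/2) * ∑ y ∈ I, c y) * D
        + (1/2) * ∑ y ∈ I, (Fo η' y - Fo η y + c y * D)|
      ≤ ((L:ℝ) - (1/2) * ∑ y ∈ I, c y) * |D|
        + (1/2) * ∑ y ∈ I, |Fo η' y - Fo η y + c y * D| := by
    refine le_trans (abs_add_le _ _) ?_
    rw [abs_mul, abs_of_nonneg hcoef, abs_mul]
    have : |(1/2 : ℝ)| = 1/2 := by norm_num
    rw [this]
    gcongr
    exact Finset.abs_sum_le_sum_abs _ _
  have s2 : ∑ y ∈ I, |Fo η' y - Fo η y + c y * D| ≤ ∑ y ∈ I, 2 * K * w y :=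
    Finset.sum_le_sum hkey
  have s3 : ∑ y ∈ I, 2 * K * w y = 2 * K * ∑ y ∈ I, w y := by rw [Finset.mul_sum]
  have hD2 : ((L:ℝ) - (1/2) * ∑ y ∈ I, c y) * |D|
      ≤ ((L:ℝ) - (1/2) * ∑ y ∈ I, c y) * (K * (2 * ψ xh)) :=
    mul_le_mul_of_nonneg_left hDb hcoef
  have hKUW := mul_le_mul_of_nonneg_left hUW hK
  have hgoal : |(L:ℝ) * D + (wgGen L M χ ξ F η' - wgGen L M χ ξ F η)|
      ≤ ((L:ℝ) - (1 - Real.cos (π / L))) * (K * (2 * ψ xh)) := by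
    rw [hexpand]
    refine le_trans s1 ?_
    rw [s3] at s2
    have hexp1 : ((L:ℝ) - (1/2) * ∑ y ∈ I, c y) * (K*(2*ψ xh))
        = (L:ℝ)*(K*(2*ψ xh)) - (∑ y ∈ I, c y)*(K*ψ xh) := by ring
    have hexp2 : ((L:ℝ) - (1 - Real.cos (π / L)))*(K*(2*ψ xh))
        = (L:ℝ)*(K*(2*ψ xh)) - (1 - Real.cos (π / L))*(K*(2*ψ xh)) := by ring
    have hexp3 : K * (2 * (1 - Real.cos (π / L)) * ψ xh)
        = (1 - Real.cos (π / L))*(K*(2*ψ xh)) := by ring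
    have hexp4 : K * ((∑ y ∈ I, c y) * ψ xh - ∑ y ∈ I, w y)
        = (∑ y ∈ I, c y)*(K*ψ xh) - K * ∑ y ∈ I, w y := by ring
    rw [hexp3, hexp4] at hKUW
    rw [hexp1] at hD2
    rw [hexp2]
    linarith [hD2, hKUW, s2]
  simpa only [hψ] using hgoal

end Contract

noncomputable def cfRate' (L : ℕ) (η η' : ℕ → ℤ) : ℝ :=
  ∑ x ∈ Finset.Icc 1 (L - 1),
    if η' x ≠ η x ∧ ∀ y, y ≠ x → η' y = η y then (1 / 2 : ℝ) else 0

section Bridge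
variable {L : ℕ} {M : ℤ} {χ ξ : ℕ → ℤ}

lemma wgFinite : Finite {η : ℕ → ℤ // wgInS L M χ ξ η} := by
  classical
  let Φ : {η : ℕ → ℤ // wgInS L M χ ξ η} → (Fin (L+1) → ℤ) := fun η x => η.1 x.1
  have hinj : Function.Injective Φ := by
    intro a b hab
    apply Subtype.ext
    funext x
    rcases le_or_gt x L with hx | hx
    · exact congrFun hab ⟨x, by omega⟩
    · rw [a.2.1.2.2.2 x hx, b.2.1.2.2.2 x hx]
  have hrange : ∀ η : {η : ℕ → ℤ // wgInS L M χ ξ η}, ∀ x : Fin (L+1),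
      Φ η x ∈ Set.Icc (χ x.1) (ξ x.1) := fun η x => ⟨η.2.2.1 x.1, η.2.2.2 x.1⟩
  let Ψ : {η : ℕ → ℤ // wgInS L M χ ξ η} → (∀ x : Fin (L+1), Set.Icc (χ x.1) (ξ x.1)) :=
    fun η x => ⟨Φ η x, hrange η x⟩
  have hinj2 : Function.Injective Ψ := by
    intro a b hab
    apply hinj
    funext x
    exact congrArg Subtype.val (congrFun hab x)
  exact Finite.of_injective Ψ hinj2

lemma wgBridge [Fintype {η : ℕ → ℤ // wgInS L M χ ξ η}]
    (f : {η : ℕ → ℤ // wgInS L M χ ξ η} → ℝ) (η : {η : ℕ → ℤ // wgInS L M χ ξ η}) :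
    ∑ η' : {η : ℕ → ℤ // wgInS L M χ ξ η}, cfRate' L η.1 η'.1 * (f η' - f η)
      = wgGen L M χ ξ (fun ζ => if h : wgInS L M χ ξ ζ then f ⟨ζ, h⟩ else 0) η.1 := by
  classical
  set Fx : (ℕ → ℤ) → ℝ := fun ζ => if h : wgInS L M χ ξ ζ then f ⟨ζ, h⟩ else 0 with hFx
  have hFη : Fx η.1 = f η := by rw [hFx]; simp only [dif_pos η.2]
  calc ∑ η' : {η : ℕ → ℤ // wgInS L M χ ξ η}, cfRate' L η.1 η'.1 * (f η' - f η)
      = ∑ η' : {η : ℕ → ℤ // wgInS L M χ ξ η}, ∑ x ∈ Finset.Icc 1 (L-1),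
          (if η'.1 x ≠ η.1 x ∧ ∀ y, y ≠ x → η'.1 y = η.1 y then (1/2:ℝ) else 0)
            * (f η' - f η) := by
        refine Finset.sum_congr rfl fun η' _ => ?_
        rw [cfRate', Finset.sum_mul]
    _ = ∑ x ∈ Finset.Icc 1 (L-1), ∑ η' : {η : ℕ → ℤ // wgInS L M χ ξ η},
          (if η'.1 x ≠ η.1 x ∧ ∀ y, y ≠ x → η'.1 y = η.1 y then (1/2:ℝ) else 0)
            * (f η' - f η) := Finset.sum_comm
    _ = ∑ x ∈ Finset.Icc 1 (L-1), (1/2:ℝ) *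
          (if wgInS L M χ ξ (wgFlip η.1 x) then Fx (wgFlip η.1 x) - Fx η.1 else 0) := by
        refine Finset.sum_congr rfl fun x hx => ?_
        by_cases hm : wgInS L M χ ξ (wgFlip η.1 x)
        · by_cases hz : wgFlip η.1 x = η.1
          · rw [if_pos hm, hz]
            rw [Finset.sum_eq_zero]
            · ring
            · intro b _
              rw [if_neg, zero_mul]
              rintro ⟨hne, hagree⟩
              have hb : b.1 = wgFlip η.1 x := wgUnique η.2.1 b.2.1 hx hne hagree
              rw [hz] at hb
              exact hne (by rw [hb])
          · rw [if_pos hm]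
            have hb₀ : (⟨wgFlip η.1 x, hm⟩ : {η : ℕ → ℤ // wgInS L M χ ξ η}).1
                = wgFlip η.1 x := rfl
            rw [Finset.sum_eq_single (⟨wgFlip η.1 x, hm⟩ : {η : ℕ → ℤ // wgInS L M χ ξ η})]
            · rw [if_pos]
              · have h1 : Fx (wgFlip η.1 x) = f ⟨wgFlip η.1 x, hm⟩ := by
                  rw [hFx]; simp only [dif_pos hm]
                rw [h1, hFη]
              · constructor
                · intro hcon
                  apply hz
                  apply wgFlip_eq_self_iff.mpr
                  rw [← wgFlip_self]
                  exact hcon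
                · intro y hy
                  exact wgFlip_ne hy
            · intro b _ hbne
              rw [if_neg, zero_mul]
              rintro ⟨hne, hagree⟩
              have hb : b.1 = wgFlip η.1 x := wgUnique η.2.1 b.2.1 hx hne hagree
              exact hbne (Subtype.ext hb)
            · intro hcon
              exact absurd (Finset.mem_univ _) hcon
        · rw [if_neg hm, mul_zero]
          rw [Finset.sum_eq_zero]
          intro b _
          rw [if_neg, zero_mul]
          rintro ⟨hne, hagree⟩
          have hb : b.1 = wgFlip η.1 x := wgUnique η.2.1 b.2.1 hx hne hagree
          rw [← hb] at hm
          exact hm b.2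
    _ = wgGen L M χ ξ (fun ζ => if h : wgInS L M χ ξ ζ then f ⟨ζ, h⟩ else 0) η.1 := rfl

end Bridge

section EigConst
open Real
variable {L : ℕ} {M : ℤ} {χ ξ : ℕ → ℤ}

lemma wgEigConst (hχ : IsZPath L M χ) (hχξ : ∀ x, χ x ≤ ξ x)
    [Fintype {η : ℕ → ℤ // wgInS L M χ ξ η}]
    (g : {η : ℕ → ℤ // wgInS L M χ ξ η} → ℝ) (μ : ℝ)
    (hμ : μ < 1 - Real.cos (π / L))
    (heig : ∀ η : {η : ℕ → ℤ // wgInS L M χ ξ η},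
      wgGen L M χ ξ (fun ζ => if h : wgInS L M χ ξ ζ then g ⟨ζ, h⟩ else 0) η.1
        = -(μ * g η)) :
    ∀ a b : {η : ℕ → ℤ // wgInS L M χ ξ η}, g a = g b := by
  classical
  set Fg : (ℕ → ℤ) → ℝ := fun ζ => if h : wgInS L M χ ξ ζ then g ⟨ζ, h⟩ else 0 with hFg
  set ψ : ℕ → ℝ := fun y => Real.sin (π * y / L) with hψ
  have hFgS : ∀ ζ (h : wgInS L M χ ξ ζ), Fg ζ = g ⟨ζ, h⟩ := by
    intro ζ h; rw [hFg]; simp only [dif_pos h]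
  have heig' : ∀ ζ (h : wgInS L M χ ξ ζ), wgGen L M χ ξ Fg ζ = -(μ * Fg ζ) := by
    intro ζ h; rw [hFgS ζ h]; exact heig ⟨ζ, h⟩
  have HE : ∀ ζ, wgInS L M χ ξ ζ → ∀ x ∈ Finset.Icc 1 (L-1),
      wgInS L M χ ξ (wgFlip ζ x) → Fg (wgFlip ζ x) = Fg ζ := by
    by_contra hcon
    push_neg at hcon
    obtain ⟨ζ₀, hζ₀, x₀, hx₀, hm₀, hne₀⟩ := hcon
    set q : {η : ℕ → ℤ // wgInS L M χ ξ η} × ℕ → ℝ :=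
      fun p => |Fg (wgFlip p.1.1 p.2) - Fg p.1.1| / (2 * ψ p.2) with hq
    set Tf := ((Finset.univ ×ˢ Finset.Icc 1 (L-1)) :
        Finset ({η : ℕ → ℤ // wgInS L M χ ξ η} × ℕ)).filter
      (fun p => wgInS L M χ ξ (wgFlip p.1.1 p.2) ∧ Fg (wgFlip p.1.1 p.2) ≠ Fg p.1.1) with hTf
    have hmem0 : (⟨⟨ζ₀, hζ₀⟩, x₀⟩ : {η : ℕ → ℤ // wgInS L M χ ξ η} × ℕ) ∈ Tf := by
      rw [hTf, Finset.mem_filter, Finset.mem_product]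
      exact ⟨⟨Finset.mem_univ _, hx₀⟩, hm₀, hne₀⟩
    obtain ⟨p₀, hp₀, hp₀max⟩ := Finset.exists_max_image Tf q ⟨_, hmem0⟩
    rw [hTf, Finset.mem_filter, Finset.mem_product] at hp₀
    obtain ⟨⟨_, hpx⟩, hpm, hpne⟩ := hp₀
    have hpxI := hpx
    rw [Finset.mem_Icc] at hpxI
    have hψp : 0 < ψ p₀.2 := wgSin_pos hpxI.1 hpxI.2
    set K := q p₀ with hK
    have hKpos : 0 < K := by
      rw [hK, hq]
      exact div_pos (abs_pos.mpr (sub_ne_zero.mpr hpne)) (by linarith)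
    have H : ∀ ζ', wgInS L M χ ξ ζ' → ∀ x ∈ Finset.Icc 1 (L-1),
        wgInS L M χ ξ (wgFlip ζ' x) →
        |Fg (wgFlip ζ' x) - Fg ζ'| ≤ K * (2 * Real.sin (π * x / L)) := by
      intro ζ' hζ' x hx hmm
      have hxI := hx
      rw [Finset.mem_Icc] at hxI
      have hψx : 0 < ψ x := wgSin_pos hxI.1 hxI.2
      by_cases hEq : Fg (wgFlip ζ' x) = Fg ζ'
      · rw [hEq, sub_self, abs_zero]
        exact mul_nonneg (le_of_lt hKpos) (by positivity)
      · have hmemT : (⟨⟨ζ', hζ'⟩, x⟩ : {η : ℕ → ℤ // wgInS L M χ ξ η} × ℕ) ∈ Tf := by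
          rw [hTf, Finset.mem_filter, Finset.mem_product]
          exact ⟨⟨Finset.mem_univ _, hx⟩, hmm, hEq⟩
        have hle := hp₀max _ hmemT
        rw [hq] at hle
        dsimp only at hle
        rw [div_le_iff₀ (by linarith)] at hle
        calc |Fg (wgFlip ζ' x) - Fg ζ'| ≤ K * (2 * ψ x) := by linarith
          _ = K * (2 * Real.sin (π * x / L)) := rfl
    have hcontr := wgContract Fg K (le_of_lt hKpos) H p₀.1.2 hpx hpm
    have hgen1 : wgGen L M χ ξ Fg (wgFlip p₀.1.1 p₀.2)
        = -(μ * Fg (wgFlip p₀.1.1 p₀.2)) := heig' _ hpm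
    have hgen2 : wgGen L M χ ξ Fg p₀.1.1 = -(μ * Fg p₀.1.1) := heig' _ p₀.1.2
    rw [hgen1, hgen2] at hcontr
    set Δ := Fg (wgFlip p₀.1.1 p₀.2) - Fg p₀.1.1 with hΔ
    have heq : (L:ℝ) * Δ + (-(μ * Fg (wgFlip p₀.1.1 p₀.2)) - -(μ * Fg p₀.1.1))
        = ((L:ℝ) - μ) * Δ := by rw [hΔ]; ring
    rw [heq] at hcontr
    have hΔval : K * (2 * Real.sin (π * p₀.2 / L)) = |Δ| := by
      have : K * (2 * ψ p₀.2) = |Δ| := by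
        rw [hK, hq]
        field_simp
        rw [hΔ]
      exact this
    rw [hΔval, abs_mul] at hcontr
    have hΔpos : 0 < |Δ| := abs_pos.mpr (sub_ne_zero.mpr hpne)
    have hLμ : (L:ℝ) - (1 - Real.cos (π/L)) < |(L:ℝ) - μ| :=
      lt_of_lt_of_le (by linarith) (le_abs_self _)
    nlinarith [hcontr, hLμ, hΔpos]
  have hreach := wgReach hχ hχξ Fg HE
  intro a b
  have ha := hreach a.1 a.2
  have hb := hreach b.1 b.2
  have ha' : g a = Fg χ := by rw [← ha]; exact (hFgS a.1 a.2).symm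
  have hb' : g b = Fg χ := by rw [← hb]; exact (hFgS b.1 b.2).symm
  rw [ha', hb']

end EigConst


/-- Wilson's bound: the spectral gap of the corner-flip dynamics on
`S^M_L(χ,ξ) = {η : χ ≤ η ≤ ξ}` (reversible w.r.t. the uniform measure) is at least
`1 - cos(π/L)`, stated via the variational characterization of the gap:
`(1 - cos(π/L)) Var(f) ≤ E(f)` for every observable `f`. -/
theorem corner_flip_gap (L : ℕ) (hL : 1 ≤ L) (M : ℤ) (χ ξ : ℕ → ℤ)
    (hχ : IsZPath L M χ) (hξ : IsZPath L M ξ) (hχξ : ∀ x, χ x ≤ ξ x) :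
    let S := {η : ℕ → ℤ // IsZPath L M η ∧ (∀ x, χ x ≤ η x) ∧ ∀ x, η x ≤ ξ x}
    let card : ℝ := (Nat.card S : ℝ)
    ∀ f : S → ℝ,
      (1 - Real.cos (Real.pi / L)) *
          ∑ᶠ η : S, (f η - (∑ᶠ η' : S, f η') / card) ^ 2 / card
        ≤ (1 / 2) * ∑ᶠ η : S, ∑ᶠ η' : S,
            (f η' - f η) ^ 2 * (1 / card) * cfRate L η.1 η'.1 := by
  intro S card f
  classical
  haveI hFinS : Finite S := wgFinite (L := L) (M := M) (χ := χ) (ξ := ξ)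
  haveI instS : Fintype S := Fintype.ofFinite S
  have hSne : Nonempty S := ⟨⟨χ, hχ, fun x => le_refl _, hχξ⟩⟩
  have hnpos : 0 < Nat.card S := Nat.card_pos
  have hcard0 : card = (Nat.card S : ℝ) := rfl
  have hcpos : (0:ℝ) < card := by rw [hcard0]; exact_mod_cast hnpos
  have hcne : card ≠ 0 := ne_of_gt hcpos
  simp only [finsum_eq_sum_of_fintype]
  set m : ℝ := (∑ η' : S, f η') / card with hm
  set h : S → ℝ := fun η => f η - m with hh
  have hsum0 : ∑ η : S, h η = 0 := by
    rw [hh]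
    rw [Finset.sum_sub_distrib, Finset.sum_const]
    have hcardS : (Finset.univ : Finset S).card = Nat.card S := by
      rw [Nat.card_eq_fintype_card]; rfl
    rw [hcardS, nsmul_eq_mul, hm]
    field_simp
    rw [hcard0, Nat.card_eq_fintype_card]
    ring
  set r : S → S → ℝ := fun a b => cfRate L a.1 b.1 with hr
  have hrsymm : ∀ a b, r a b = r b a := by
    intro a b
    rw [hr]
    dsimp only
    refine Finset.sum_congr rfl fun x _ => ?_
    refine if_congr ?_ rfl rfl
    constructor
    · rintro ⟨h1, h2⟩
      exact ⟨h1.symm, fun y hy => (h2 y hy).symm⟩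
    · rintro ⟨h1, h2⟩
      exact ⟨h1.symm, fun y hy => (h2 y hy).symm⟩
  set A : Matrix S S ℝ := fun a b => (if b = a then ∑ ζ : S, r a ζ else 0) - r a b with hA
  have hAherm : A.IsHermitian := by
    have : A.conjTranspose = A := by
      apply Matrix.ext
      intro i j
      rw [Matrix.conjTranspose_apply, star_trivial, hA]
      dsimp only
      by_cases hij : i = j
      · rw [hij]
      · rw [if_neg hij, if_neg (fun hc => hij hc.symm), hrsymm j i]
    exact this
  have hmul : ∀ (g : S → ℝ) (a : S), A.mulVec g a = -(∑ b : S, r a b * (g b - g a)) := by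
    intro g a
    have e0 : A.mulVec g a = ∑ b : S, A a b * g b := rfl
    rw [e0]
    have e1 : ∑ b : S, A a b * g b
        = (∑ b : S, (if b = a then (∑ ζ : S, r a ζ) * g b else 0)) - ∑ b : S, r a b * g b := by
      rw [← Finset.sum_sub_distrib]
      refine Finset.sum_congr rfl fun b _ => ?_
      rw [hA]
      dsimp only
      split_ifs <;> ring
    rw [e1, Finset.sum_ite_eq' Finset.univ a (fun b => (∑ ζ : S, r a ζ) * g b),
      if_pos (Finset.mem_univ a)]
    have e2 : ∑ b : S, r a b * (g b - g a)
        = (∑ b : S, r a b * g b) - (∑ b : S, r a b) * g a := by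
      rw [Finset.sum_mul, ← Finset.sum_sub_distrib]
      refine Finset.sum_congr rfl fun b _ => by ring
    rw [e2, Finset.sum_mul]
    ring_nf
    simp only [mul_comm (g a)]
    ring
  have hconst : ∀ (g : S → ℝ) (μ : ℝ), μ < (1 - Real.cos (Real.pi / L)) →
      A.mulVec g = μ • g → ∀ i j, g i = g j := by
    intro g μ hμlt hgeig
    refine @wgEigConst L M χ ξ hχ hχξ instS g μ hμlt ?_
    intro η
    have h1 : A.mulVec g η = μ * g η := by rw [hgeig]; rfl
    have h2 := hmul g η
    have h3 : ∑ b : S, r η b * (g b - g η)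
        = wgGen L M χ ξ (fun ζ => if hz : wgInS L M χ ξ ζ then g ⟨ζ, hz⟩ else 0) η.1 :=
      @wgBridge L M χ ξ instS g η
    refine Eq.trans h3.symm ?_
    linarith [h1, h2]
  have hspec := spec_poincare A hAherm (1 - Real.cos (Real.pi / L)) hconst h hsum0
  have hquad : ∑ a : S, h a * (A.mulVec h) a
      = (1/2) * ∑ a : S, ∑ b : S, (h b - h a)^2 * r a b := by
    have e1 : ∑ a : S, h a * (A.mulVec h) a = ∑ a : S, ∑ b : S, r a b * (h a - h b) * h a := by
      refine Finset.sum_congr rfl fun a _ => ?_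
      rw [hmul h a, mul_neg, Finset.mul_sum, ← Finset.sum_neg_distrib]
      exact Finset.sum_congr rfl fun b _ => by ring
    have e2 : ∑ a : S, ∑ b : S, r a b * (h a - h b) * h a
        = ∑ a : S, ∑ b : S, r a b * (h a - h b) * (-(h b)) := by
      conv_lhs => rw [Finset.sum_comm]
      refine Finset.sum_congr rfl fun a _ => Finset.sum_congr rfl fun b _ => ?_
      rw [hrsymm b a]
      ring
    have e3 : ∑ a : S, ∑ b : S, (h b - h a)^2 * r a b
        = (∑ a : S, ∑ b : S, r a b * (h a - h b) * h a)
          + (∑ a : S, ∑ b : S, r a b * (h a - h b) * (-(h b))) := by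
      rw [← Finset.sum_add_distrib]
      refine Finset.sum_congr rfl fun a _ => ?_
      rw [← Finset.sum_add_distrib]
      exact Finset.sum_congr rfl fun b _ => by ring
    rw [e1]
    rw [e3, ← e2, ← e1]
    ring
  have hL1 : ∑ η : S, (f η - m)^2 / card = (∑ η : S, h η ^ 2) / card := by
    rw [Finset.sum_div]
  have hR1 : ∑ a : S, ∑ b : S, (f b - f a)^2 * (1/card) * r a b
      = (1/card) * ∑ a : S, ∑ b : S, (h b - h a)^2 * r a b := by
    rw [Finset.mul_sum]
    refine Finset.sum_congr rfl fun a _ => ?_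
    rw [Finset.mul_sum]
    refine Finset.sum_congr rfl fun b _ => ?_
    rw [hh]
    dsimp only
    ring
  calc (1 - Real.cos (Real.pi / L)) * ∑ η : S, (f η - m)^2 / card
      = ((1 - Real.cos (Real.pi / L)) * ∑ η : S, h η ^ 2) / card := by
        rw [hL1, ← mul_div_assoc]
    _ ≤ ((1/2) * ∑ a : S, ∑ b : S, (h b - h a)^2 * r a b) / card := by
        rw [div_eq_mul_inv, div_eq_mul_inv]
        refine mul_le_mul_of_nonneg_right ?_ (inv_nonneg.mpr (le_of_lt hcpos))
        rw [← hquad]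
        exact hspec
    _ = (1/2) * ∑ a : S, ∑ b : S, (f b - f a)^2 * (1/card) * r a b := by
        rw [hR1]; ring
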